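/- Let s be any real-valued function on natural bundles, and for a natural bundle b let T(b) denote the maximum of ∑_{c ∈ P} s(c) over all tree partitions P of b (this maximum exists: the set of tree partitions of b is finite and nonempty). Then T satisfies the recurrence: if b has no hidden attribute, T(b) = s(b); otherwise T(b) = max( s(b), max over attributes x with b x = none of ∑_{j : Fin (C x)} T(Function.update b x (some j)) ). -/

import Mathlib

/-- A natural bundle: each attribute either takes a specific value (`some a`) or is
hidden (`none`). -/
abbrev Bundle (k : ℕ) (C : Fin k → ℕ) := ∀ i : Fin k, Option (Fin (C i))

/-- `splitB b x` : the bundles obtained from `b` by revealing the hidden attribute `x`. -/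
def splitB {k : ℕ} {C : Fin k → ℕ} (b : Bundle k C) (x : Fin k) : Finset (Bundle k C) :=
  Finset.univ.image fun j : Fin (C x) => Function.update b x (some j)

/-- Tree partitions of a natural bundle `b`: obtained from `{b}` by recursively
splitting a bundle along one of its hidden attributes. -/
inductive IsTreePartition (k : ℕ) (C : Fin k → ℕ) (b : Bundle k C) :
    Finset (Bundle k C) → Prop
  | base : IsTreePartition k C b {b}
  | step (P : Finset (Bundle k C)) (c : Bundle k C) (x : Fin k) :
      IsTreePartition k C b P → c ∈ P → c x = none →
      IsTreePartition k C b ((P.erase c) ∪ splitB c x)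

/-! A tree partition of `b` other than `{b}` is, for some hidden attribute `x`, the disjoint union
of tree partitions of the children `update b x (some j)`: its first split is along `x`, and every
later split happens inside one child. Conversely, tree partitions of the children can be grafted
onto `splitB b x`, because distinct members of a tree partition are incompatible, so a graft never
collides with a bundle already present. Hence the best score of `b` is the larger of `s b` and the
best, over hidden `x`, of the sum of the children's best scores. -/

open Finset Function

theorem Finset.biUnion_update_erase_union {ι α : Type*} [DecidableEq ι] [DecidableEq α]
    {s : Finset ι} (f : ι → Finset α) {i₀ : ι} (hi₀ : i₀ ∈ s) {a : α}
    (ha : ∀ i ∈ s, a ∈ f i → i = i₀) (t : Finset α) :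
    s.biUnion (update f i₀ ((f i₀).erase a ∪ t)) = (s.biUnion f).erase a ∪ t := by
  ext d
  simp only [mem_biUnion, update_apply, mem_union, mem_erase]
  grind

section TreePartition

variable {k : ℕ} {C : Fin k → ℕ}

lemma mem_splitB {b d : Bundle k C} {x : Fin k} :
    d ∈ splitB b x ↔ ∃ j : Fin (C x), d = update b x (some j) := by
  simp [splitB, eq_comm]

def Refines (d c : Bundle k C) : Prop :=
  ∀ i, c i ≠ none → d i = c i

/-- No full assignment refines both `c` and `d`. -/
def Incompatible (c d : Bundle k C) : Prop :=
  ∃ i, c i ≠ none ∧ d i ≠ none ∧ c i ≠ d i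

lemma Refines.trans {c d e : Bundle k C} (hcd : Refines c d) (hde : Refines d e) :
    Refines c e := fun i hi => by
  rw [hcd i (by rwa [hde i hi]), hde i hi]

lemma refines_update {c : Bundle k C} {x : Fin k} (hx : c x = none) (j : Fin (C x)) :
    Refines (update c x (some j)) c := fun i hi => by
  rw [update_of_ne]
  rintro rfl
  exact hi hx

lemma Incompatible.symm {c d : Bundle k C} (h : Incompatible c d) : Incompatible d c := by
  obtain ⟨i, hc, hd, hcd⟩ := h
  exact ⟨i, hd, hc, Ne.symm hcd⟩

lemma Incompatible.ne {c d : Bundle k C} (h : Incompatible c d) : c ≠ d := by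
  rintro rfl
  obtain ⟨_, -, -, hcc⟩ := h
  exact hcc rfl

lemma Incompatible.of_refines_left {c d e : Bundle k C} (h : Incompatible c e)
    (hdc : Refines d c) : Incompatible d e := by
  obtain ⟨i, hc, he, hce⟩ := h
  exact ⟨i, by rwa [hdc i hc], he, by rwa [hdc i hc]⟩

lemma incompatible_update_update {c : Bundle k C} {x : Fin k} {j₁ j₂ : Fin (C x)}
    (hj : j₁ ≠ j₂) : Incompatible (update c x (some j₁)) (update c x (some j₂)) :=
  ⟨x, by simp, by simp, by simpa using hj⟩

namespace IsTreePartition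

variable {b c d : Bundle k C} {P Q : Finset (Bundle k C)}

lemma refines (h : IsTreePartition k C b P) (hd : d ∈ P) : Refines d b := by
  induction h generalizing d with
  | base => rw [mem_singleton.1 hd]; exact fun _ _ => rfl
  | step P c x _ hc hcx ih =>
    rcases mem_union.1 hd with hd | hd
    · exact ih (mem_of_mem_erase hd)
    · obtain ⟨j, rfl⟩ := mem_splitB.1 hd
      exact (refines_update hcx j).trans (ih hc)

lemma apply_eq_some {x : Fin k} {j : Fin (C x)}
    (h : IsTreePartition k C (update b x (some j)) P) (hd : d ∈ P) : d x = some j := by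
  simpa using h.refines hd x (by simp)

lemma pairwiseDisjoint_update {x : Fin k} {f : Fin (C x) → Finset (Bundle k C)}
    (hf : ∀ j, IsTreePartition k C (update b x (some j)) (f j)) :
    ((univ : Finset (Fin (C x))) : Set (Fin (C x))).PairwiseDisjoint f := by
  intro i _ j _ hij
  refine disjoint_left.2 fun d hdi hdj => hij ?_
  exact Option.some_injective _ (((hf i).apply_eq_some hdi).symm.trans ((hf j).apply_eq_some hdj))

lemma incompatible (h : IsTreePartition k C b P) (hc : c ∈ P) (hd : d ∈ P) (hcd : c ≠ d) :
    Incompatible c d := by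
  induction h generalizing c d with
  | base => exact absurd ((mem_singleton.1 hc).trans (mem_singleton.1 hd).symm) hcd
  | step P e x _ he hex ih =>
    have old {a} (ha : a ∈ P.erase e) : Incompatible e a :=
      ih he (mem_of_mem_erase ha) (mem_erase.1 ha).1.symm
    rcases mem_union.1 hc with hc | hc <;> rcases mem_union.1 hd with hd | hd
    · exact ih (mem_of_mem_erase hc) (mem_of_mem_erase hd) hcd
    · obtain ⟨j, rfl⟩ := mem_splitB.1 hd
      exact ((old hc).of_refines_left (refines_update hex j)).symm
    · obtain ⟨j, rfl⟩ := mem_splitB.1 hc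
      exact (old hd).of_refines_left (refines_update hex j)
    · obtain ⟨j₁, rfl⟩ := mem_splitB.1 hc
      obtain ⟨j₂, rfl⟩ := mem_splitB.1 hd
      exact incompatible_update_update fun hj => hcd (hj ▸ rfl)

lemma notMem_erase_of_refines (hP : IsTreePartition k C b P) (hc : c ∈ P)
    (hdc : Refines d c) : d ∉ P.erase c := fun hd =>
  ((hP.incompatible hc (mem_of_mem_erase hd) (mem_erase.1 hd).1.symm).of_refines_left hdc).ne rfl

lemma erase_union (hP : IsTreePartition k C b P) (hc : c ∈ P) (hQ : IsTreePartition k C c Q) :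
    IsTreePartition k C b (P.erase c ∪ Q) := by
  induction hQ with
  | base => rwa [erase_union_eq c P hc]
  | step Q d y hQ hd hdy ih =>
    have hdP := hP.notMem_erase_of_refines hc (hQ.refines hd)
    convert ih.step _ d y (mem_union_right _ hd) hdy using 1
    rw [erase_union_distrib, erase_eq_of_notMem hdP, union_assoc]

lemma biUnion (hP : IsTreePartition k C b P) {Q : Bundle k C → Finset (Bundle k C)}
    (hQ : ∀ c ∈ P, IsTreePartition k C c (Q c)) : IsTreePartition k C b (P.biUnion Q) := by
  suffices ∀ S ⊆ P, IsTreePartition k C b (P \ S ∪ S.biUnion Q) by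
    simpa using this P subset_rfl
  intro S
  induction S using Finset.induction with
  | empty => intro _; simpa using hP
  | insert c S hcS ih =>
    intro hS
    have hcP := hS (mem_insert_self c S)
    have hc : c ∈ P \ S ∪ S.biUnion Q := mem_union_left _ (mem_sdiff.2 ⟨hcP, hcS⟩)
    have hcQ : c ∉ S.biUnion Q := by
      simp only [mem_biUnion, not_exists, not_and]
      intro e he hce
      exact ((hP.incompatible (hS (mem_insert_of_mem he)) hcP fun h => hcS (h ▸ he)).of_refines_left
        ((hQ e (hS (mem_insert_of_mem he))).refines hce)).ne rfl
    convert (ih ((subset_insert c S).trans hS)).erase_union hc (hQ c hcP) using 1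
    rw [erase_union_distrib, erase_eq_of_notMem hcQ, sdiff_insert, biUnion_insert]
    ac_rfl

lemma biUnion_update {x : Fin k} (hx : b x = none) {f : Fin (C x) → Finset (Bundle k C)}
    (hf : ∀ j, IsTreePartition k C (update b x (some j)) (f j)) :
    IsTreePartition k C b (univ.biUnion f) := by
  have hsplit : IsTreePartition k C b (splitB b x) := by
    simpa using base.step {b} b x (mem_singleton_self b) hx
  -- each child `d` of the split knows its index `j` as `d x = some j`
  have := hsplit.biUnion (Q := fun d => (d x).elim ∅ f) fun d hd => by
    obtain ⟨j, rfl⟩ := mem_splitB.1 hd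
    simpa using hf j
  simpa [splitB, image_biUnion] using this

lemma eq_singleton_of_forall_ne_none (hb : ∀ x, b x ≠ none) (h : IsTreePartition k C b P) :
    P = {b} := by
  induction h with
  | base => rfl
  | step P c x _ hc hcx ih =>
    subst ih
    exact absurd (mem_singleton.1 hc ▸ hcx) (hb x)

lemma eq_singleton_or_eq_biUnion_update (h : IsTreePartition k C b P) :
    P = {b} ∨ ∃ x, b x = none ∧ ∃ f : Fin (C x) → Finset (Bundle k C),
      (∀ j, IsTreePartition k C (update b x (some j)) (f j)) ∧ P = univ.biUnion f := by
  induction h with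
  | base => exact Or.inl rfl
  | step P c x _ hc hcx ih =>
    right
    rcases ih with rfl | ⟨y, hy, f, hf, rfl⟩
    · obtain rfl := mem_singleton.1 hc
      refine ⟨x, hcx, fun j => {update c x (some j)}, fun _ => base, ?_⟩
      rw [erase_singleton, empty_union, biUnion_singleton, splitB]
    · obtain ⟨j₀, -, hcj₀⟩ := mem_biUnion.1 hc
      have hc_only (i) (_ : i ∈ univ) (hci : c ∈ f i) : i = j₀ :=
        Option.some_injective _ (((hf i).apply_eq_some hci).symm.trans ((hf j₀).apply_eq_some hcj₀))
      refine ⟨y, hy, update f j₀ ((f j₀).erase c ∪ splitB c x), fun j => ?_,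
        (biUnion_update_erase_union f (mem_univ j₀) hc_only _).symm⟩
      rcases eq_or_ne j j₀ with rfl | hj
      · simpa using (hf j).step _ c x hcj₀ hcx
      · simpa [hj] using hf j

end IsTreePartition

end TreePartition

section TreeValue

variable {k : ℕ} {C : Fin k → ℕ} (s : Bundle k C → ℝ)

open Classical in
noncomputable def treeValue (b : Bundle k C) : ℝ :=
  (univ.filter (IsTreePartition k C b)).sup' ⟨{b}, by simpa using IsTreePartition.base⟩
    fun P => ∑ c ∈ P, s c

variable {s} {b : Bundle k C} {P : Finset (Bundle k C)}

lemma exists_isTreePartition_sum_eq_treeValue (b : Bundle k C) :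
    ∃ P, IsTreePartition k C b P ∧ ∑ c ∈ P, s c = treeValue s b := by
  classical
  unfold treeValue
  obtain ⟨P, hP, hsum⟩ := exists_mem_eq_sup' _ fun P => ∑ c ∈ P, s c
  exact ⟨P, (mem_filter.1 hP).2, hsum.symm⟩

lemma IsTreePartition.sum_le_treeValue (hP : IsTreePartition k C b P) :
    ∑ c ∈ P, s c ≤ treeValue s b := by
  classical
  unfold treeValue
  exact le_sup' (fun P => ∑ c ∈ P, s c) (mem_filter.2 ⟨mem_univ P, hP⟩)

lemma treeValue_le {r : ℝ} (h : ∀ P, IsTreePartition k C b P → ∑ c ∈ P, s c ≤ r) :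
    treeValue s b ≤ r := by
  obtain ⟨P, hP, hsum⟩ := exists_isTreePartition_sum_eq_treeValue (s := s) b
  exact hsum ▸ h P hP

lemma le_treeValue : s b ≤ treeValue s b := by
  simpa using IsTreePartition.base.sum_le_treeValue (s := s) (b := b)

lemma treeValue_of_forall_ne_none (hb : ∀ x, b x ≠ none) : treeValue s b = s b :=
  le_antisymm (treeValue_le fun P hP => by
    rw [hP.eq_singleton_of_forall_ne_none hb, sum_singleton]) le_treeValue

lemma sum_treeValue_update_le {x : Fin k} (hx : b x = none) :
    ∑ j, treeValue s (update b x (some j)) ≤ treeValue s b := by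
  choose f hf hsum using fun j : Fin (C x) =>
    exists_isTreePartition_sum_eq_treeValue (s := s) (update b x (some j))
  calc ∑ j, treeValue s (update b x (some j)) = ∑ c ∈ univ.biUnion f, s c := by
        rw [sum_biUnion (IsTreePartition.pairwiseDisjoint_update hf)]
        exact sum_congr rfl fun j _ => (hsum j).symm
    _ ≤ treeValue s b := (IsTreePartition.biUnion_update hx hf).sum_le_treeValue

lemma treeValue_eq_max (hne : (univ.filter fun x => b x = none).Nonempty) :
    treeValue s b = max (s b)
      ((univ.filter fun x => b x = none).sup' hne
        fun x => ∑ j, treeValue s (update b x (some j))) := by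
  refine le_antisymm (treeValue_le fun P hP => ?_) (max_le le_treeValue (sup'_le _ _ fun x hx =>
    sum_treeValue_update_le (mem_filter.1 hx).2))
  rcases hP.eq_singleton_or_eq_biUnion_update with rfl | ⟨x, hx, f, hf, rfl⟩
  · exact (sum_singleton _ _).trans_le (le_max_left _ _)
  · calc ∑ c ∈ univ.biUnion f, s c = ∑ j, ∑ c ∈ f j, s c :=
          sum_biUnion (IsTreePartition.pairwiseDisjoint_update hf)
      _ ≤ ∑ j, treeValue s (update b x (some j)) :=
          sum_le_sum fun j _ => (hf j).sum_le_treeValue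
      _ ≤ _ := le_sup' (fun x => ∑ j, treeValue s (update b x (some j)))
          (mem_filter.2 ⟨mem_univ x, hx⟩)
      _ ≤ _ := le_max_right _ _

end TreeValue

/-- For any `s`, the set of tree partitions of any bundle is finite and nonempty, so the
maximum `T b` of `∑_{c ∈ P} s c` over tree partitions `P` of `b` exists, and `T`
satisfies the recurrence `T b = s b` when `b` has no hidden attribute and
`T b = max (s b) (max_{x : b x = none} ∑_j T (update b x (some j)))` otherwise. -/
theorem stmt11 (k : ℕ) (C : Fin k → ℕ) (s : Bundle k C → ℝ) :
    (∀ b : Bundle k C,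
      {P | IsTreePartition k C b P}.Finite ∧ {P | IsTreePartition k C b P}.Nonempty) ∧
    ∃ T : Bundle k C → ℝ,
      (∀ b : Bundle k C,
        (∃ P, IsTreePartition k C b P ∧ ∑ c ∈ P, s c = T b) ∧
        (∀ P, IsTreePartition k C b P → ∑ c ∈ P, s c ≤ T b)) ∧
      (∀ b : Bundle k C, (∀ x, b x ≠ none) → T b = s b) ∧
      (∀ b : Bundle k C, ∀ h : ∃ x, b x = none,
        T b = max (s b)
          ((Finset.univ.filter fun x => b x = none).sup'
            (by obtain ⟨x, hx⟩ := h
                exact ⟨x, Finset.mem_filter.2 ⟨Finset.mem_univ x, hx⟩⟩)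
            (fun x => ∑ j : Fin (C x), T (Function.update b x (some j))))) :=
  ⟨fun b => ⟨Set.toFinite _, {b}, .base⟩, treeValue s,
    fun b => ⟨exists_isTreePartition_sum_eq_treeValue b, fun _ hP => hP.sum_le_treeValue⟩,
    fun _ hb => treeValue_of_forall_ne_none hb, fun _ _ => treeValue_eq_max _⟩
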